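/- arXiv:2507.14816 — 2 statements merged into one kernel-verified Lean document; each statement's English description precedes it below -/
import Mathlib

section
/- The directed capacity is invariant under time reflection: for finite K ⊂ Z^d, cap(K) = cap(K↕) = Σ_{x ∈ K} P_x^+(H̃_K = ∞), where K↕ = {(x_1,...,x_{d−1},−x_d) : x ∈ K}. -/
/- Directed (upward/downward) random walk framework on `ℤ^(d+1)`
   (total dimension `d+1`, spatial dimension `d`; the paper's `d` is our `d+1`). -/

noncomputable section
open scoped Classical

/-- Vertices of `ℤ^(d+1)`; the last coordinate is the "time" coordinate. -/
abbrev Vec (d : ℕ) := Fin (d + 1) → ℤ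

/-- `e` belongs to the set `J` of upward jumps: last coordinate `1`,
spatial part of `l¹`-norm `1`. -/
def IsUpJump (d : ℕ) (e : Vec d) : Prop :=
  e (Fin.last d) = 1 ∧ ∑ i : Fin d, |e i.castSucc| = 1

/-- One-step transition probabilities of the upward walk: each of the `2d`
jumps in `J` has probability `1/(2d)`. -/
def pUp (d : ℕ) (x y : Vec d) : ℝ := if IsUpJump d (y - x) then 1 / (2 * d) else 0

/-- One-step transition probabilities of the downward walk (jumps in `-J`). -/
def pDown (d : ℕ) (x y : Vec d) : ℝ := if IsUpJump d (x - y) then 1 / (2 * d) else 0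

/-- `n`-step transition probabilities of the Markov chain with kernel `p`. -/
def stepN {α : Type*} (p : α → α → ℝ) : ℕ → α → α → ℝ
  | 0 => fun x y => if x = y then 1 else 0
  | n + 1 => fun x y => ∑' z, stepN p n x z * p z y

/-- `entN p S n x` is the probability that the chain started at `x` enters `S`
for the first time exactly at time `n` (i.e. `P_x(H_S = n)`). -/
def entN {α : Type*} (p : α → α → ℝ) (S : Set α) : ℕ → α → ℝ
  | 0 => fun x => if x ∈ S then 1 else 0
  | n + 1 => fun x => if x ∈ S then 0 else ∑' z, p x z * entN p S n z

/-- `P_x(H_S < ∞)`: probability of ever entering `S` (entrance time `H_S = inf{n ≥ 0 : Xₙ ∈ S}`). -/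
def hitProb {α : Type*} (p : α → α → ℝ) (S : Set α) (x : α) : ℝ := ∑' n, entN p S n x

/-- `P_x(H̃_S < ∞)`: probability of hitting `S` at some time `n ≥ 1`. -/
def retProb {α : Type*} (p : α → α → ℝ) (S : Set α) (x : α) : ℝ :=
  ∑' z, p x z * hitProb p S z

/-- `P_x(H̃_S = ∞)`. -/
def escProb {α : Type*} (p : α → α → ℝ) (S : Set α) (x : α) : ℝ := 1 - retProb p S x

/-- The Green function `g(x,y) = E_x [ Σ_{n≥0} 1_{Xₙ = y} ]`. -/
def green {α : Type*} (p : α → α → ℝ) (x y : α) : ℝ := ∑' n, stepN p n x y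

/-- Directed capacity: `cap K = Σ_{x∈K} P_x⁻ (H̃_K = ∞)`. -/
def dcap (d : ℕ) (K : Finset (Vec d)) : ℝ := ∑ x ∈ K, escProb (pDown d) (↑K) x

/-- `entAtN p S y n x = P_x(H_S = n, X_{H_S} = y)`. -/
def entAtN {α : Type*} (p : α → α → ℝ) (S : Set α) (y : α) : ℕ → α → ℝ
  | 0 => fun x => if x ∈ S ∧ x = y then 1 else 0
  | n + 1 => fun x => if x ∈ S then 0 else ∑' z, p x z * entAtN p S y n z

/-- `P_x(H_S < ∞, X_{H_S} = y)`. -/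
def hitAtProb {α : Type*} (p : α → α → ℝ) (S : Set α) (y x : α) : ℝ := ∑' n, entAtN p S y n x

/-- `P_x(H̃_S < ∞, X_{H̃_S} = y)`. -/
def hitAtTilde {α : Type*} (p : α → α → ℝ) (S : Set α) (y x : α) : ℝ :=
  ∑' z, p x z * hitAtProb p S y z

end

/-- Time reflection `(x₁,…,x_{d-1}, x_d) ↦ (x₁,…,x_{d-1}, -x_d)`. -/
def timeReflect (d : ℕ) (x : Vec d) : Vec d :=
  Function.update x (Fin.last d) (-(x (Fin.last d)))

/-! Cutting at the first return, `Σ_{x∈K} P_x(H̃_K < ∞) = Σ_{x,y∈K} Σ_m w_m(x,y)`, where `w_m(x,y)`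
is the weight of the paths of length `m + 1` from `x` to `y` whose interior avoids `K`.
Reversing a path turns a path of the downward walk from `x` to `y` into a path of the upward walk
from `y` to `x` with the same weight, so the double sum, and with it the sum of escape
probabilities, is the same for both walks. Time reflection conjugates the upward walk into the
downward one and maps `K` to `K↕`, which gives the first equality. -/

noncomputable section

open scoped Classical

namespace DirectedCapacity

section Kernel

variable {α : Type*} {p : α → α → ℝ}

def RowFinite (p : α → α → ℝ) : Prop := ∀ x, ∃ s : Finset α, ∀ y ∉ s, p x y = 0

structure IsSubstochastic (p : α → α → ℝ) : Prop where
  nonneg : ∀ x y, 0 ≤ p x y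
  rowFinite : RowFinite p
  tsum_le_one : ∀ x, ∑' y, p x y ≤ 1

theorem RowFinite.summable_mul (hp : RowFinite p) (x : α) (f : α → ℝ) :
    Summable fun z => p x z * f z := by
  obtain ⟨s, hs⟩ := hp x
  exact summable_of_ne_finset_zero fun z hz => by rw [hs z hz, zero_mul]

theorem RowFinite.exists_tsum_mul_eq_sum (hp : RowFinite p) (x : α) :
    ∃ s : Finset α, ∀ f : α → ℝ, ∑' z, p x z * f z = ∑ z ∈ s, p x z * f z := by
  obtain ⟨s, hs⟩ := hp x
  exact ⟨s, fun f => tsum_eq_sum fun z hz => by rw [hs z hz, zero_mul]⟩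

theorem entAtN_nonneg (hp : ∀ x y, 0 ≤ p x y) (S : Set α) (y : α) (n : ℕ) (x : α) :
    0 ≤ entAtN p S y n x := by
  induction n generalizing x with
  | zero => unfold entAtN; split_ifs <;> norm_num
  | succ n ih =>
    unfold entAtN
    split_ifs
    · exact le_rfl
    · exact tsum_nonneg fun z => mul_nonneg (hp x z) (ih z)

theorem sum_range_entN_le_one (hp : IsSubstochastic p) (S : Set α) (N : ℕ) (x : α) :
    ∑ n ∈ Finset.range N, entN p S n x ≤ 1 := by
  induction N generalizing x with
  | zero => simp
  | succ N ih =>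
    rw [Finset.sum_range_succ']
    by_cases hx : x ∈ S
    · simp [entN, hx]
    · calc ∑ n ∈ Finset.range N, entN p S (n + 1) x + entN p S 0 x
          = ∑' z, p x z * ∑ n ∈ Finset.range N, entN p S n z := by
            simp only [entN, hx, if_false, add_zero, Finset.mul_sum]
            exact (Summable.tsum_finsetSum fun n _ => hp.rowFinite.summable_mul x _).symm
        _ ≤ ∑' z, p x z * 1 :=
            (hp.rowFinite.summable_mul x _).tsum_le_tsum
              (fun z => mul_le_mul_of_nonneg_left (ih z) (hp.nonneg x z))
              (hp.rowFinite.summable_mul x _)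
        _ ≤ 1 := by simpa only [mul_one] using hp.tsum_le_one x

theorem entN_eq_sum_entAtN (hp : RowFinite p) (K : Finset α) (n : ℕ) (x : α) :
    entN p K n x = ∑ y ∈ K, entAtN p K y n x := by
  induction n generalizing x with
  | zero => by_cases hx : x ∈ K <;> simp [entN, entAtN, hx]
  | succ n ih =>
    by_cases hx : x ∈ K
    · simp [entN, entAtN, hx]
    · simp only [entN, entAtN, Finset.mem_coe, hx, if_false, ih, Finset.mul_sum]
      exact Summable.tsum_finsetSum fun y _ => hp.summable_mul x _

theorem summable_entAtN (hp : IsSubstochastic p) {K : Finset α} {y : α} (hy : y ∈ K) (x : α) :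
    Summable fun n => entAtN p K y n x := by
  have hnonneg := entAtN_nonneg hp.nonneg K
  have hentN : Summable fun n => entN p K n x :=
    summable_of_sum_range_le
      (fun n => by
        rw [entN_eq_sum_entAtN hp.rowFinite]
        exact Finset.sum_nonneg fun y _ => hnonneg y n x)
      (sum_range_entN_le_one hp K · x)
  refine hentN.of_nonneg_of_le (hnonneg y · x) fun n => ?_
  rw [entN_eq_sum_entAtN hp.rowFinite]
  exact Finset.single_le_sum (fun y _ => hnonneg y n x) hy

theorem hitProb_eq_sum_hitAtProb (hp : IsSubstochastic p) (K : Finset α) (x : α) :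
    hitProb p K x = ∑ y ∈ K, hitAtProb p K y x := by
  simp only [hitProb, hitAtProb, entN_eq_sum_entAtN hp.rowFinite]
  exact Summable.tsum_finsetSum fun y hy => summable_entAtN hp hy x

theorem retProb_eq_sum_hitAtTilde (hp : IsSubstochastic p) (K : Finset α) (x : α) :
    retProb p K x = ∑ y ∈ K, hitAtTilde p K y x := by
  simp only [retProb, hitAtTilde, hitProb_eq_sum_hitAtProb hp, Finset.mul_sum]
  exact Summable.tsum_finsetSum fun y _ => hp.rowFinite.summable_mul x _

/-- `taboo p S m x y` is the weight of the paths `x → y` of length `m + 1` whose `m` intermediate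
points avoid `S` (Chung's taboo probability). -/
def taboo (p : α → α → ℝ) (S : Set α) : ℕ → α → α → ℝ
  | 0 => p
  | m + 1 => fun x y => ∑' z, p x z * Sᶜ.indicator 1 z * taboo p S m z y

theorem taboo_succ (S : Set α) (m : ℕ) (x y : α) :
    taboo p S (m + 1) x y = ∑' z, p x z * Sᶜ.indicator 1 z * taboo p S m z y := rfl

theorem tsum_comm_of_finite {β M : Type*} [AddCommMonoid M] [TopologicalSpace M]
    [ContinuousAdd M] [T3Space M] {f : α → β → M} {s : Finset α} {t : Finset β}
    (hs : ∀ a ∉ s, ∀ b, f a b = 0) (ht : ∀ b ∉ t, ∀ a, f a b = 0) :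
    ∑' a, ∑' b, f a b = ∑' b, ∑' a, f a b := by
  refine (Summable.tsum_comm' ?_ (fun a => ?_) (fun b => ?_)).symm
  · refine summable_of_ne_finset_zero (s := s ×ˢ t) fun ab hab => ?_
    rcases not_and_or.mp (Finset.mem_product.not.mp hab) with h | h
    exacts [hs _ h _, ht _ h _]
  · exact summable_of_ne_finset_zero fun b hb => ht b hb a
  · exact summable_of_ne_finset_zero fun a ha => hs a ha b

theorem taboo_succ' (hp : RowFinite p) (hpT : RowFinite (flip p)) (S : Set α) (m : ℕ)
    (x y : α) : taboo p S (m + 1) x y = ∑' z, taboo p S m x z * Sᶜ.indicator 1 z * p z y := by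
  induction m generalizing x with
  | zero => rfl
  | succ m ih =>
    obtain ⟨s, hs⟩ := hp x
    obtain ⟨t, ht⟩ := hpT y
    calc taboo p S (m + 2) x y
        = ∑' z, p x z * Sᶜ.indicator 1 z * taboo p S (m + 1) z y := taboo_succ S _ x y
      _ = ∑' z, ∑' w,
            p x z * Sᶜ.indicator 1 z * (taboo p S m z w * Sᶜ.indicator 1 w * p w y) := by
          simp_rw [ih, ← tsum_mul_left]
      _ = ∑' w, ∑' z,
            p x z * Sᶜ.indicator 1 z * (taboo p S m z w * Sᶜ.indicator 1 w * p w y) :=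
          tsum_comm_of_finite (fun z (hz : z ∉ s) w => by simp [hs z hz])
            (fun w (hw : w ∉ t) z => by simp [show p w y = 0 from ht w hw])
      _ = ∑' w, taboo p S (m + 1) x w * Sᶜ.indicator 1 w * p w y := by
          refine tsum_congr fun w => ?_
          rw [taboo_succ, ← tsum_mul_right, ← tsum_mul_right]
          exact tsum_congr fun z => by ring

theorem taboo_flip (hp : RowFinite p) (hpT : RowFinite (flip p)) (S : Set α) (m : ℕ) (x y : α) :
    taboo (flip p) S m x y = taboo p S m y x := by
  induction m generalizing x y with
  | zero => rfl
  | succ m ih =>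
    rw [taboo_succ, taboo_succ' hp hpT]
    exact tsum_congr fun z => by rw [ih, flip]; ring

theorem tsum_mul_entAtN_eq_taboo {S : Set α} {y : α} (hy : y ∈ S) (m : ℕ) (x : α) :
    ∑' z, p x z * entAtN p S y m z = taboo p S m x y := by
  induction m generalizing x with
  | zero =>
    rw [tsum_eq_single y fun z hz => by simp [entAtN, hz]]
    simp [entAtN, hy, taboo]
  | succ m ih =>
    have hent : ∀ z, entAtN p S y (m + 1) z = Sᶜ.indicator 1 z * taboo p S m z y := fun z => by
      by_cases hz : z ∈ S <;> simp [entAtN, hz, ih]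
    simp only [hent, taboo_succ, mul_assoc]

theorem hitAtTilde_eq_tsum_taboo (hp : IsSubstochastic p) {K : Finset α} {y : α} (hy : y ∈ K)
    (x : α) : hitAtTilde p K y x = ∑' m, taboo p K m x y := by
  obtain ⟨s, hs⟩ := hp.rowFinite.exists_tsum_mul_eq_sum x
  rw [hitAtTilde, hs]
  simp only [hitAtProb, hs, ← tsum_mul_left, ← tsum_mul_entAtN_eq_taboo (p := p)
    (Finset.mem_coe.mpr hy)]
  exact (Summable.tsum_finsetSum fun z _ => (summable_entAtN hp hy z).mul_left _).symm

theorem hitAtTilde_flip (hp : IsSubstochastic p) (hpT : IsSubstochastic (flip p)) {K : Finset α}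
    {x y : α} (hx : x ∈ K) (hy : y ∈ K) : hitAtTilde (flip p) K y x = hitAtTilde p K x y := by
  rw [hitAtTilde_eq_tsum_taboo hpT hy, hitAtTilde_eq_tsum_taboo hp hx]
  exact tsum_congr fun m => taboo_flip hp.rowFinite hpT.rowFinite K m x y

theorem sum_escProb_flip (hp : IsSubstochastic p) (hpT : IsSubstochastic (flip p))
    (K : Finset α) : ∑ x ∈ K, escProb (flip p) K x = ∑ x ∈ K, escProb p K x := by
  suffices ∑ x ∈ K, retProb (flip p) K x = ∑ x ∈ K, retProb p K x by
    simp only [escProb, Finset.sum_sub_distrib, this]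
  calc ∑ x ∈ K, retProb (flip p) K x
      = ∑ x ∈ K, ∑ y ∈ K, hitAtTilde p K x y :=
        Finset.sum_congr rfl fun x hx => by
          rw [retProb_eq_sum_hitAtTilde hpT]
          exact Finset.sum_congr rfl fun y hy => hitAtTilde_flip hp hpT hx hy
    _ = ∑ y ∈ K, retProb p K y := by
        rw [Finset.sum_comm]
        exact Finset.sum_congr rfl fun y _ => (retProb_eq_sum_hitAtTilde hp K y).symm

end Kernel

section Conjugation

variable {α β : Type*} (σ : α ≃ β) {p : α → α → ℝ} {q : β → β → ℝ}

theorem entN_equiv (hpq : ∀ x y, q (σ x) (σ y) = p x y) (T : Set β) (n : ℕ) (x : α) :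
    entN q T n (σ x) = entN p (σ ⁻¹' T) n x := by
  cases n with
  | zero => simp only [entN, Set.mem_preimage]
  | succ n =>
    simp only [entN, Set.mem_preimage]
    rw [← σ.tsum_eq]
    simp only [hpq, entN_equiv hpq T n]

theorem escProb_equiv (hpq : ∀ x y, q (σ x) (σ y) = p x y) (T : Set β) (x : α) :
    escProb q T (σ x) = escProb p (σ ⁻¹' T) x := by
  simp only [escProb, retProb, hitProb]
  rw [← σ.tsum_eq]
  simp only [hpq, entN_equiv σ hpq]

end Conjugation

section DirectedWalk

variable {d : ℕ}

def upJumps (d : ℕ) : Finset (Vec d) :=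
  (Finset.univ ×ˢ ({1, -1} : Finset ℤ)).image fun iv : Fin d × ℤ =>
    Pi.single (Fin.last d) 1 + Pi.single iv.1.castSucc iv.2

theorem card_upJumps_le : (upJumps d).card ≤ 2 * d := by
  refine Finset.card_image_le.trans ?_
  rw [Finset.card_product, Finset.card_univ, Fintype.card_fin, mul_comm 2]
  exact Nat.mul_le_mul_left d Finset.card_le_two

theorem IsUpJump.eq_zero_of_ne {e : Vec d} (he : IsUpJump d e) {i j : Fin d}
    (hi : e i.castSucc ≠ 0) (hij : j ≠ i) : e j.castSucc = 0 := by
  have hle := Finset.add_le_sum (f := fun k : Fin d => |e k.castSucc|)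
    (fun k _ => abs_nonneg _) (Finset.mem_univ i) (Finset.mem_univ j) hij.symm
  rw [he.2] at hle
  have := Int.one_le_abs hi
  exact abs_eq_zero.mp (le_antisymm (by linarith) (abs_nonneg _))

theorem mem_upJumps {e : Vec d} (he : IsUpJump d e) : e ∈ upJumps d := by
  obtain ⟨i, -, hi⟩ := Finset.exists_ne_zero_of_sum_ne_zero (he.2.trans_ne one_ne_zero)
  rw [abs_ne_zero] at hi
  have habs : |e i.castSucc| = 1 := le_antisymm
    (he.2 ▸ Finset.single_le_sum (f := fun k : Fin d => |e k.castSucc|)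
      (fun k _ => abs_nonneg _) (Finset.mem_univ i))
    (Int.one_le_abs hi)
  refine Finset.mem_image.mpr
    ⟨(i, e i.castSucc), Finset.mem_product.mpr ⟨Finset.mem_univ i, ?_⟩, ?_⟩
  · rcases abs_eq (zero_le_one' ℤ) |>.mp habs with h | h <;> simp [h]
  · funext k
    induction k using Fin.lastCases with
    | last => simp [he.1, (Fin.castSucc_lt_last i).ne]
    | cast j =>
      by_cases hji : j = i
      · subst hji; simp [(Fin.castSucc_lt_last j).ne]
      · simp [(Fin.castSucc_lt_last j).ne, IsUpJump.eq_zero_of_ne he hi hji,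
          Fin.castSucc_injective d |>.ne hji]

theorem pUp_zero_eq_zero {e : Vec d} (he : e ∉ upJumps d) : pUp d 0 e = 0 := by
  rw [pUp, sub_zero, if_neg (mt mem_upJumps he)]

theorem tsum_pUp_zero_le_one : ∑' e, pUp d 0 e ≤ 1 := by
  rw [tsum_eq_sum fun e he => pUp_zero_eq_zero he]
  calc ∑ e ∈ upJumps d, pUp d 0 e
      ≤ ∑ _e ∈ upJumps d, (2 * d : ℝ)⁻¹ :=
        Finset.sum_le_sum fun e _ => by unfold pUp; split_ifs <;> simp
    _ = (upJumps d).card * (2 * d : ℝ)⁻¹ := by rw [Finset.sum_const, nsmul_eq_mul]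
    _ ≤ (2 * d) * (2 * d : ℝ)⁻¹ := by gcongr; exact_mod_cast card_upJumps_le
    _ ≤ 1 := mul_inv_le_one

theorem isSubstochastic_of_eq_pUp_zero {p : Vec d → Vec d → ℝ} (g : Vec d → Vec d ≃ Vec d)
    (hp : ∀ x y, p x y = pUp d 0 (g x y)) : IsSubstochastic p where
  nonneg x y := by rw [hp, pUp]; split_ifs <;> positivity
  rowFinite x := ⟨(upJumps d).image (g x).symm, fun y hy => by
    rw [hp]
    exact pUp_zero_eq_zero fun h =>
      hy (Finset.mem_image.mpr ⟨_, h, (g x).symm_apply_apply y⟩)⟩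
  tsum_le_one x := by
    simp only [hp]
    rw [(g x).tsum_eq (pUp d 0)]
    exact tsum_pUp_zero_le_one

theorem isSubstochastic_pUp : IsSubstochastic (pUp d) :=
  isSubstochastic_of_eq_pUp_zero Equiv.subRight fun x y => by rw [pUp, pUp, sub_zero]; rfl

theorem isSubstochastic_flip_pUp : IsSubstochastic (flip (pUp d)) :=
  isSubstochastic_of_eq_pUp_zero Equiv.subLeft fun x y => by rw [flip, pUp, pUp, sub_zero]; rfl

theorem timeReflect_involutive (d : ℕ) : Function.Involutive (timeReflect d) := fun x => by
  funext j
  by_cases hj : j = Fin.last d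
  · subst hj; simp [timeReflect]
  · simp [timeReflect, Function.update_of_ne hj]

theorem timeReflect_sub (x y : Vec d) :
    timeReflect d x - timeReflect d y = timeReflect d (x - y) := by
  funext j
  by_cases hj : j = Fin.last d
  · subst hj; simp only [timeReflect, Pi.sub_apply, Function.update_self, sub_neg_eq_add, neg_sub]
    ring
  · simp [timeReflect, Function.update_of_ne hj]

theorem isUpJump_timeReflect_iff (e : Vec d) :
    IsUpJump d (timeReflect d e) ↔ IsUpJump d (-e) := by
  simp [IsUpJump, timeReflect, (Fin.castSucc_lt_last _).ne]

theorem pDown_timeReflect (x y : Vec d) :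
    pDown d (timeReflect d x) (timeReflect d y) = pUp d x y := by
  simp only [pDown, pUp, timeReflect_sub, isUpJump_timeReflect_iff, neg_sub]

end DirectedWalk

end DirectedCapacity

end

open DirectedCapacity

theorem dcap_timeReflect_general (d : ℕ) (K : Finset (Vec d)) :
    dcap d K = dcap d (K.image (timeReflect d)) ∧
      dcap d K = ∑ x ∈ K, escProb (pUp d) (↑K) x := by
  have hUp : dcap d K = ∑ x ∈ K, escProb (pUp d) K x :=
    sum_escProb_flip isSubstochastic_pUp isSubstochastic_flip_pUp K
  have hR := timeReflect_involutive d
  have hK : timeReflect d ⁻¹' ↑(K.image (timeReflect d)) = ↑K := by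
    rw [Finset.coe_image, Set.preimage_image_eq _ hR.injective]
  refine ⟨?_, hUp⟩
  rw [hUp, dcap, Finset.sum_image hR.injective.injOn]
  refine Finset.sum_congr rfl fun x _ => ?_
  rw [← hK]
  exact (escProb_equiv hR.toPerm pDown_timeReflect _ x).symm

/-- capacity is invariant under time reflection, and equals the
analogous sum for the upward walk:
`cap K = cap (K↕) = Σ_{x∈K} P_x⁺(H̃_K = ∞)`. -/
theorem dcap_timeReflect (d : ℕ) (hd : 2 ≤ d) (K : Finset (Vec d)) :
    dcap d K = dcap d (K.image (timeReflect d)) ∧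
      dcap d K = ∑ x ∈ K, escProb (pUp d) (↑K) x :=
  dcap_timeReflect_general d K
end

section
/- If N_1, N_2 are independent Poisson random variables with means λ and μ, and μ(e−1) ≤ λ/e, then P(N_1 < N_2) ≤ 2 e^{−λ/10}. -/
/-!
If `N₁ < N₂` then `N₁ ≤ λ/2` or `N₂ ≥ λ/2`, so a union bound reduces the claim to two Poisson
tails. For a Poisson variable `N` of mean `r`, `E[e^{tN}] = e^{r(e^t - 1)}`, so exponential Chebyshev
with `t = -1` gives `P(N₁ ≤ λ/2) ≤ e^{λ(1/e - 1) + λ/2} ≤ e^{-λ/10}` (as `1/e ≤ 2/5`), and with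
`t = 1` it gives `P(N₂ ≥ λ/2) ≤ e^{μ(e - 1) - λ/2} ≤ e^{λ/e - λ/2} ≤ e^{-λ/10}`.
-/

open MeasureTheory ProbabilityTheory Real
open scoped NNReal

lemma measure_lt_le_measure_le_add_measure_ge {Ω α : Type*} [MeasurableSpace Ω] [LinearOrder α]
    (P : Measure Ω) (X Y : Ω → α) (x : α) :
    P {ω | X ω < Y ω} ≤ P {ω | X ω ≤ x} + P {ω | x ≤ Y ω} := by
  refine (measure_mono fun ω (hω : X ω < Y ω) ↦ ?_).trans (measure_union_le _ _)
  rcases le_total (X ω) x with hX | hX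
  · exact Or.inl hX
  · exact Or.inr (hX.trans hω.le)

lemma hasSum_poissonMeasure_real_mul_exp (r : ℝ≥0) (t : ℝ) :
    HasSum (fun n : ℕ ↦ (poissonMeasure r).real {n} * exp (t * n)) (exp (r * (exp t - 1))) := by
  have hterm (n : ℕ) :
      (poissonMeasure r).real {n} * exp (t * n) = exp (-r) * ((r * exp t) ^ n / n.factorial) := by
    rw [poissonMeasure_real_singleton, mul_comm t, exp_nat_mul, mul_pow]
    ring
  rw [funext hterm, mul_sub_one, sub_eq_neg_add, exp_add]
  have h := NormedSpace.expSeries_div_hasSum_exp ((r : ℝ) * exp t)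
  rw [← exp_eq_exp_ℝ] at h
  exact h.mul_left _

lemma poissonMeasure_le_exp_of_nonneg (r : ℝ≥0) {S : Set ℕ} {t b : ℝ}
    (hS : ∀ n ∈ S, 0 ≤ t * n + b) :
    poissonMeasure r S ≤ ENNReal.ofReal (exp (r * (exp t - 1) + b)) := by
  have hsum := (hasSum_poissonMeasure_real_mul_exp r t).mul_right (exp b)
  have hweight (n : ℕ) : 0 ≤ (poissonMeasure r).real {n} * exp (t * n) * exp b := by positivity
  calc poissonMeasure r S = ∑' n, S.indicator (fun n ↦ poissonMeasure r {n}) n :=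
        (Measure.tsum_indicator_apply_singleton _ _ .of_discrete).symm
    _ ≤ ∑' n, ENNReal.ofReal ((poissonMeasure r).real {n} * exp (t * n) * exp b) := by
        refine ENNReal.tsum_le_tsum fun n ↦ ?_
        by_cases hn : n ∈ S
        · rw [Set.indicator_of_mem hn, ← ofReal_measureReal, mul_assoc, ← exp_add]
          exact ENNReal.ofReal_le_ofReal
            (le_mul_of_one_le_right measureReal_nonneg (one_le_exp (hS n hn)))
        · rw [Set.indicator_of_notMem hn]
          exact zero_le
    _ = ENNReal.ofReal (exp (r * (exp t - 1) + b)) := by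
        rw [← ENNReal.ofReal_tsum_of_nonneg hweight hsum.summable, hsum.tsum_eq, exp_add]

lemma poissonMeasure_le_le_exp (r : ℝ≥0) (x : ℝ) :
    poissonMeasure r {n | (n : ℝ) ≤ x} ≤ ENNReal.ofReal (exp (r * (exp (-1) - 1) + x)) :=
  poissonMeasure_le_exp_of_nonneg r fun n (hn : (n : ℝ) ≤ x) ↦ by linarith

lemma poissonMeasure_ge_le_exp (r : ℝ≥0) (x : ℝ) :
    poissonMeasure r {n | x ≤ (n : ℝ)} ≤ ENNReal.ofReal (exp (r * (exp 1 - 1) - x)) :=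
  poissonMeasure_le_exp_of_nonneg r fun n (hn : x ≤ (n : ℝ)) ↦ by linarith

lemma exp_neg_one_le_two_fifths : exp (-1) ≤ 2 / 5 :=
  exp_neg_one_lt_d9.le.trans (by norm_num)

theorem poisson_comparison_general (Ω : Type*) [MeasurableSpace Ω] (P : Measure Ω)
    (N₁ N₂ : Ω → ℕ) (lam mu : ℝ≥0)
    (hmu : (mu : ℝ) * (Real.exp 1 - 1) ≤ (lam : ℝ) / Real.exp 1)
    (hmeas₁ : Measurable N₁) (hmeas₂ : Measurable N₂)
    (h₁ : Measure.map N₁ P = poissonMeasure lam)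
    (h₂ : Measure.map N₂ P = poissonMeasure mu) :
    P {ω | N₁ ω < N₂ ω} ≤ ENNReal.ofReal (2 * Real.exp (-(lam : ℝ) / 10)) := by
  have hlam : (0 : ℝ) ≤ lam := lam.coe_nonneg
  have hmu' : (mu : ℝ) * (exp 1 - 1) ≤ lam * exp (-1) := by rwa [exp_neg, ← div_eq_mul_inv]
  have hlow : (lam : ℝ) * (exp (-1) - 1) + lam / 2 ≤ -lam / 10 := by
    nlinarith [exp_neg_one_le_two_fifths]
  have hhigh : (mu : ℝ) * (exp 1 - 1) - lam / 2 ≤ -lam / 10 := by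
    nlinarith [exp_neg_one_le_two_fifths]
  have hcast : {ω | N₁ ω < N₂ ω} = {ω | (N₁ ω : ℝ) < N₂ ω} := by simp only [Nat.cast_lt]
  calc P {ω | N₁ ω < N₂ ω}
      ≤ P {ω | (N₁ ω : ℝ) ≤ lam / 2} + P {ω | lam / 2 ≤ (N₂ ω : ℝ)} :=
        hcast ▸ measure_lt_le_measure_le_add_measure_ge P _ _ _
    _ = poissonMeasure lam {n | (n : ℝ) ≤ lam / 2} + poissonMeasure mu {n | lam / 2 ≤ (n : ℝ)} := by
        rw [← h₁, ← h₂, Measure.map_apply hmeas₁ .of_discrete, Measure.map_apply hmeas₂ .of_discrete]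
        rfl
    _ ≤ ENNReal.ofReal (exp (-lam / 10)) + ENNReal.ofReal (exp (-lam / 10)) :=
        add_le_add
          ((poissonMeasure_le_le_exp _ _).trans (ENNReal.ofReal_le_ofReal (exp_le_exp.2 hlow)))
          ((poissonMeasure_ge_le_exp _ _).trans (ENNReal.ofReal_le_ofReal (exp_le_exp.2 hhigh)))
    _ = ENNReal.ofReal (2 * exp (-lam / 10)) := by
        rw [← ENNReal.ofReal_add (exp_nonneg _) (exp_nonneg _), two_mul]

/-- if `N₁, N₂` are independent Poisson random variables with
means `λ` and `μ`, and `μ(e−1) ≤ λ/e`, then `P(N₁ < N₂) ≤ 2 e^{−λ/10}`. -/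
theorem poisson_comparison (Ω : Type*) [MeasurableSpace Ω] (P : Measure Ω)
    (hP : IsProbabilityMeasure P) (N₁ N₂ : Ω → ℕ) (lam mu : ℝ≥0)
    (hlam : 0 < lam) (hmu : (mu : ℝ) * (Real.exp 1 - 1) ≤ (lam : ℝ) / Real.exp 1)
    (hmeas₁ : Measurable N₁) (hmeas₂ : Measurable N₂)
    (hindep : IndepFun N₁ N₂ P)
    (h₁ : Measure.map N₁ P = poissonMeasure lam)
    (h₂ : Measure.map N₂ P = poissonMeasure mu) :
    P {ω | N₁ ω < N₂ ω} ≤ ENNReal.ofReal (2 * Real.exp (-(lam : ℝ) / 10)) :=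
  poisson_comparison_general Ω P N₁ N₂ lam mu hmu hmeas₁ hmeas₂ h₁ h₂
end
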